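/- Let (X, μ) be a measure space with μ a finite measure and μ(X) > 0, let λ : X → ℝ be measurable, and suppose there is λ₀ ∈ (0, 1) with |λ(x)| ≤ λ₀ for every x. Write a = (μ(X)).toReal, A = a + ∫ λ² dμ, and r₀ = (1/2)·log((1+λ₀)/(1−λ₀)). Then ∫_{−r₀}^{r₀} ( ∫ (cosh(r)² − λ(x)²·sinh(r)²) dμ(x) ) dr ≤ A·( λ₀/(1−λ₀²) + (1/2)·log((1+λ₀)/(1−λ₀)) ). (Theorem 1.2 / Theorem 3.5: vol(C(M³)) ≤ vol(M(r₀)) ≤ A_hyp(λ₀/(1−λ₀²) + ½log((1+λ₀)/(1−λ₀))).) -/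

import Mathlib

/-!
The volume integrand is `a cosh² r - I sinh² r` with `I = ∫ λ² dμ`, whose primitive is
`(a - I)/2 · sinh r cosh r + (a + I)/2 · r`. Since `r₀ = artanh λ₀`, one has
`sinh r₀ cosh r₀ = λ₀ / (1 - λ₀²)`, so the volume equals
`(a - I) λ₀ / (1 - λ₀²) + (a + I) r₀`, and replacing `a - I` by `a + I = A` gives the bound.
-/

open MeasureTheory Real Set

theorem Real.sinh_artanh_mul_cosh_artanh {x : ℝ} (hx : x ∈ Ioo (-1) 1) :
    sinh (artanh x) * cosh (artanh x) = x / (1 - x ^ 2) := by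
  have h : 0 ≤ 1 - x ^ 2 := by nlinarith [hx.1, hx.2]
  rw [sinh_artanh hx, cosh_artanh hx, div_mul_div_comm, mul_one, mul_self_sqrt h]

theorem hasDerivAt_mul_cosh_sq_sub_mul_sinh_sq_primitive (a b r : ℝ) :
    HasDerivAt (fun r => (a - b) / 2 * (sinh r * cosh r) + (a + b) / 2 * r)
      (a * cosh r ^ 2 - b * sinh r ^ 2) r := by
  have h := (((hasDerivAt_sinh r).mul (hasDerivAt_cosh r)).const_mul ((a - b) / 2)).add
    ((hasDerivAt_id r).const_mul ((a + b) / 2))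
  refine h.congr_deriv ?_
  linear_combination (-((a + b) / 2)) * cosh_sq_sub_sinh_sq r

theorem integral_mul_cosh_sq_sub_mul_sinh_sq_symm (a b t : ℝ) :
    ∫ r in (-t)..t, (a * cosh r ^ 2 - b * sinh r ^ 2)
      = (a - b) * (sinh t * cosh t) + (a + b) * t := by
  rw [intervalIntegral.integral_eq_sub_of_hasDerivAt
    (fun r _ => hasDerivAt_mul_cosh_sq_sub_mul_sinh_sq_primitive a b r)
    (Continuous.intervalIntegrable (by fun_prop) _ _), sinh_neg, cosh_neg]
  ring

theorem integral_cosh_sq_sub_mul_sinh_sq {X : Type*} [MeasurableSpace X] {μ : Measure X}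
    [IsFiniteMeasure μ] {f : X → ℝ} (hf : Integrable f μ) (r : ℝ) :
    ∫ x, (cosh r ^ 2 - f x * sinh r ^ 2) ∂μ
      = μ.real univ * cosh r ^ 2 - (∫ x, f x ∂μ) * sinh r ^ 2 := by
  rw [integral_sub (integrable_const _) (hf.mul_const _), integral_const, integral_mul_const,
    smul_eq_mul]

theorem stmt_11_general {X : Type*} [MeasurableSpace X] (μ : Measure X) [IsFiniteMeasure μ]
    (lam : X → ℝ) (hmeas : Measurable lam)
    (lam₀ : ℝ) (hlam₀ : lam₀ ∈ Set.Ioo (0 : ℝ) 1) (hbound : ∀ x, |lam x| ≤ lam₀)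
    (a A r₀ : ℝ) (ha : a = (μ Set.univ).toReal)
    (hA : A = a + ∫ x, (lam x) ^ 2 ∂μ)
    (hr₀ : r₀ = (1 / 2) * Real.log ((1 + lam₀) / (1 - lam₀))) :
    (∫ r in (-r₀)..r₀, ∫ x, (Real.cosh r ^ 2 - (lam x) ^ 2 * Real.sinh r ^ 2) ∂μ)
      ≤ A * (lam₀ / (1 - lam₀ ^ 2) + (1 / 2) * Real.log ((1 + lam₀) / (1 - lam₀))) := by
  obtain ⟨hlam₀_pos, hlam₀_lt⟩ := hlam₀
  have hlam₀_mem : lam₀ ∈ Ioo (-1) 1 := ⟨by linarith, hlam₀_lt⟩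
  have hr₀_artanh : r₀ = artanh lam₀ := by
    rw [hr₀, artanh_eq_half_log (Ioo_subset_Icc_self hlam₀_mem)]
  have hint : Integrable (fun x => lam x ^ 2) μ :=
    .of_bound (hmeas.pow_const 2).aestronglyMeasurable (lam₀ ^ 2) (.of_forall fun x => by
      simpa only [norm_pow, Real.norm_eq_abs] using pow_le_pow_left₀ (abs_nonneg _) (hbound x) 2)
  have hI : 0 ≤ ∫ x, lam x ^ 2 ∂μ := integral_nonneg fun x => sq_nonneg _
  have hc : 0 ≤ lam₀ / (1 - lam₀ ^ 2) := div_nonneg hlam₀_pos.le (by nlinarith)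
  rw [intervalIntegral.integral_congr fun r _ => integral_cosh_sq_sub_mul_sinh_sq hint r,
    integral_mul_cosh_sq_sub_mul_sinh_sq_symm, ← hr₀, hr₀_artanh,
    sinh_artanh_mul_cosh_artanh hlam₀_mem, hA, ha, ← measureReal_def]
  nlinarith

theorem stmt_11 {X : Type*} [MeasurableSpace X] (μ : Measure X) [IsFiniteMeasure μ]
    (hμ : 0 < μ Set.univ) (lam : X → ℝ) (hmeas : Measurable lam)
    (lam₀ : ℝ) (hlam₀ : lam₀ ∈ Set.Ioo (0 : ℝ) 1) (hbound : ∀ x, |lam x| ≤ lam₀)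
    (a A r₀ : ℝ) (ha : a = (μ Set.univ).toReal)
    (hA : A = a + ∫ x, (lam x) ^ 2 ∂μ)
    (hr₀ : r₀ = (1 / 2) * Real.log ((1 + lam₀) / (1 - lam₀))) :
    (∫ r in (-r₀)..r₀, ∫ x, (Real.cosh r ^ 2 - (lam x) ^ 2 * Real.sinh r ^ 2) ∂μ)
      ≤ A * (lam₀ / (1 - lam₀ ^ 2) + (1 / 2) * Real.log ((1 + lam₀) / (1 - lam₀))) :=
  stmt_11_general μ lam hmeas lam₀ hlam₀ hbound a A r₀ ha hA hr₀
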